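/- arXiv:math/0309363 — 3 statements merged into one kernel-verified Lean document; each statement's English description precedes it below -/
import Mathlib

section
/- (Sinclair's stability lemma) Let φ : A → B be a surjective algebra homomorphism between Banach algebras with separating space S(φ), and let (Bₙ)_{n∈ℕ} be any sequence in B. Then there exists n₀ ∈ ℕ such that for all n ≥ n₀, the closure of B₁B₂⋯Bₙ · S(φ) equals the closure of B₁B₂⋯B_{n+1} · S(φ). -/
/-!
Pick preimages `cₙ` of the `Bₙ` and let `Rₙ` be multiplication by `cₙ` on `A`. A linear map `T`
between Banach spaces becomes continuous modulo its separating space `𝔖(T)` (open mapping theorem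
on the closure of the graph), so `𝔖(S ∘ T)` is the closure of `S(𝔖(T))` for continuous `S`, and
`closure (B₁⋯Bₙ · 𝔖(φ)) = 𝔖(φ ∘ R₁ ∘ ⋯ ∘ Rₙ)` is a decreasing sequence of closed subspaces.
If it dropped infinitely often, each drop would make `φ ∘ R₁ ∘ ⋯ ∘ Rₙ` unbounded modulo the next
subspace, and a gliding hump `y = ∑ⱼ R₁ ⋯ R_{nⱼ} aⱼ`, with the `aⱼ` tiny under every partial
product and each hump dominating all earlier ones, would force `‖φ y‖ ≥ j` for every `j`.
-/

open Filter Topology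

section

variable {𝕜 D E F G : Type*} [NontriviallyNormedField 𝕜]
  [NormedAddCommGroup D] [NormedSpace 𝕜 D] [NormedAddCommGroup E] [NormedSpace 𝕜 E]
  [NormedAddCommGroup F] [NormedSpace 𝕜 F] [NormedAddCommGroup G] [NormedSpace 𝕜 G]

def separatingSpace (T : E →ₗ[𝕜] F) : Submodule 𝕜 F :=
  T.graph.topologicalClosure.comap (LinearMap.inr 𝕜 E F)

theorem mem_separatingSpace_iff {T : E →ₗ[𝕜] F} {b : F} :
    b ∈ separatingSpace T ↔
      ∃ u : ℕ → E, Tendsto u atTop (𝓝 0) ∧ Tendsto (fun k => T (u k)) atTop (𝓝 b) := by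
  change ((0 : E), b) ∈ closure (T.graph : Set (E × F)) ↔ _
  simp only [mem_closure_iff_seq_limit, nhds_prod_eq, tendsto_prod_iff']
  constructor
  · rintro ⟨x, hx, hfst, hsnd⟩
    refine ⟨fun k => (x k).1, hfst, ?_⟩
    simpa only [(LinearMap.mem_graph_iff _ _).1 (hx _)] using hsnd
  · rintro ⟨u, hu, hTu⟩
    exact ⟨fun k => (u k, T (u k)), fun k => rfl, hu, hTu⟩

instance isClosed_separatingSpace (T : E →ₗ[𝕜] F) : IsClosed (separatingSpace T : Set F) :=
  T.graph.isClosed_topologicalClosure.preimage (continuous_const.prodMk continuous_id)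

theorem separatingSpace_comp_le (T : E →ₗ[𝕜] F) (R : D →L[𝕜] E) :
    separatingSpace (T ∘ₗ R.toLinearMap) ≤ separatingSpace T := by
  intro b hb
  obtain ⟨u, hu, hTu⟩ := mem_separatingSpace_iff.1 hb
  exact mem_separatingSpace_iff.2
    ⟨fun k => R (u k), (R.continuous.tendsto' 0 0 (map_zero R)).comp hu, hTu⟩

theorem separatingSpace_le_of_continuous {T : E →ₗ[𝕜] F} {W : Submodule 𝕜 F}
    [IsClosed (W : Set F)] (hT : Continuous (W.mkQ ∘ₗ T)) : separatingSpace T ≤ W := by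
  intro b hb
  obtain ⟨u, hu, hTu⟩ := mem_separatingSpace_iff.1 hb
  have hzero : Tendsto (fun k => W.mkQ (T (u k))) atTop (𝓝 0) :=
    (hT.tendsto' 0 0 (map_zero _)).comp hu
  have hb' : Tendsto (fun k => W.mkQ (T (u k))) atTop (𝓝 (W.mkQ b)) :=
    (W.continuous_mkQ.tendsto b).comp hTu
  simpa using tendsto_nhds_unique hb' hzero

theorem continuous_mkQ_comp_separatingSpace [CompleteSpace E] [CompleteSpace F] (T : E →ₗ[𝕜] F) :
    Continuous ((separatingSpace T).mkQ ∘ₗ T) := by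
  set Γ := T.graph.topologicalClosure
  have : CompleteSpace Γ := T.graph.isClosed_topologicalClosure.completeSpace_coe
  have hgraph : ∀ x, (x, T x) ∈ Γ := fun x => T.graph.le_topologicalClosure rfl
  let π : Γ →L[𝕜] E := (ContinuousLinearMap.fst 𝕜 E F).comp Γ.subtypeL
  have hπ : Function.Surjective π := fun x => ⟨⟨(x, T x), hgraph x⟩, rfl⟩
  rw [(π.isQuotientMap hπ).continuous_iff]
  have hfactor : ⇑((separatingSpace T).mkQ ∘ₗ T) ∘ π =
      fun g : Γ => (separatingSpace T).mkQ (g : E × F).2 := by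
    funext g
    refine (Submodule.Quotient.eq _).2 ?_
    change ((0 : E), T (g : E × F).1 - (g : E × F).2) ∈ Γ
    convert Γ.sub_mem (hgraph (g : E × F).1) g.2 using 1
    ext <;> simp
  rw [hfactor]
  exact (Submodule.continuous_mkQ _).comp (continuous_snd.comp continuous_subtype_val)

theorem Submodule.exists_tendsto_sub_of_tendsto_mkQ {W : Submodule 𝕜 F} {x : ℕ → F}
    (hx : Tendsto (fun k => W.mkQ (x k)) atTop (𝓝 0)) :
    ∃ s : ℕ → F, (∀ k, s k ∈ W) ∧ Tendsto (fun k => x k - s k) atTop (𝓝 0) := by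
  have hε : ∀ k : ℕ, (0 : ℝ) < 1 / ((k : ℝ) + 1) := fun k => by positivity
  choose m hm hmx using fun k => Submodule.Quotient.norm_mk_lt (W.mkQ (x k)) (hε k)
  refine ⟨fun k => x k - m k, fun k => (Submodule.Quotient.eq W).1 (hm k).symm, ?_⟩
  simp only [sub_sub_cancel]
  refine squeeze_zero_norm (fun k => (hmx k).le) ?_
  simpa using hx.norm.add tendsto_one_div_add_atTop_nhds_zero_nat

theorem coe_separatingSpace_comp [CompleteSpace E] [CompleteSpace F] (S : F →L[𝕜] G)
    (T : E →ₗ[𝕜] F) :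
    (separatingSpace (S.toLinearMap ∘ₗ T) : Set G) = closure (S '' separatingSpace T) := by
  apply subset_antisymm
  · intro b hb
    obtain ⟨u, hu, hSTu⟩ := mem_separatingSpace_iff.1 hb
    obtain ⟨s, hs, hTs⟩ := Submodule.exists_tendsto_sub_of_tendsto_mkQ
      (((continuous_mkQ_comp_separatingSpace T).tendsto' 0 0 (map_zero _)).comp hu)
    have hSs : Tendsto (fun k => S (s k)) atTop (𝓝 b) := by
      simpa using hSTu.sub ((S.continuous.tendsto' 0 0 (map_zero S)).comp hTs)
    exact mem_closure_of_tendsto hSs (Eventually.of_forall fun k => ⟨s k, hs k, rfl⟩)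
  · refine closure_minimal ?_ (isClosed_separatingSpace _)
    rintro _ ⟨s, hs, rfl⟩
    obtain ⟨u, hu, hTu⟩ := mem_separatingSpace_iff.1 hs
    exact mem_separatingSpace_iff.2 ⟨u, hu, (S.continuous.tendsto s).comp hTu⟩

theorem frequently_le_norm_mkQ_of_not_separatingSpace_le {T : E →ₗ[𝕜] F} {W : Submodule 𝕜 F}
    [IsClosed (W : Set F)] (hTW : ¬ separatingSpace T ≤ W) (M : ℝ) :
    ∃ᶠ x in 𝓝 0, M ≤ ‖W.mkQ (T x)‖ := by
  refine fun hbdd => hTW (separatingSpace_le_of_continuous ?_)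
  obtain ⟨r, hr, hball⟩ := Metric.eventually_nhds_iff_ball.1 (hbdd.mono fun _ => le_of_not_ge)
  obtain ⟨C, hC⟩ := LinearMap.bound_of_ball_bound hr M (W.mkQ ∘ₗ T) hball
  exact ((W.mkQ ∘ₗ T).mkContinuous C hC).continuous

def rangeProd {M : Type*} [Monoid M] (f : ℕ → M) (m k : ℕ) : M :=
  ((List.range' m k).map f).prod

theorem rangeProd_add {M : Type*} [Monoid M] (f : ℕ → M) (m k l : ℕ) :
    rangeProd f m (k + l) = rangeProd f m k * rangeProd f (m + k) l := by
  simp only [rangeProd, ← List.range'_append, one_mul, List.map_append, List.prod_append]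

theorem rangeProd_succ {M : Type*} [Monoid M] (f : ℕ → M) (m k : ℕ) :
    rangeProd f m (k + 1) = rangeProd f m k * f (m + k) := by
  rw [rangeProd_add]
  simp [rangeProd]

theorem exists_tsum_nat_add_eq_rangeProd_apply [CompleteSpace E] (R : ℕ → E →L[𝕜] E)
    {n : ℕ → ℕ} (hn : StrictMono n) {a : ℕ → E}
    (hsmall : ∀ j, ∀ m ≤ n j, ‖rangeProd R m (n j - m) (a j)‖ ≤ (1 / 2) ^ j) (j : ℕ) :
    ∃ z : E, ‖z‖ ≤ 2 ∧ ∑' i, rangeProd R 0 (n (i + (j + 1))) (a (i + (j + 1))) =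
      rangeProd R 0 (n j + 1) z := by
  have hle : ∀ i, n j + 1 ≤ n (i + (j + 1)) := fun i => hn (by omega)
  set w := fun i => rangeProd R (n j + 1) (n (i + (j + 1)) - (n j + 1)) (a (i + (j + 1)))
  have hw : ∀ i, ‖w i‖ ≤ (1 / 2) ^ i := fun i =>
    (hsmall _ _ (hle i)).trans (pow_le_pow_of_le_one (by norm_num) (by norm_num) (by omega))
  refine ⟨∑' i, w i, tsum_of_norm_bounded hasSum_geometric_two hw, ?_⟩
  rw [ContinuousLinearMap.map_tsum _ (.of_norm_bounded summable_geometric_two hw)]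
  refine tsum_congr fun i => ?_
  have hsplit := rangeProd_add R 0 (n j + 1) (n (i + (j + 1)) - (n j + 1))
  rw [zero_add, Nat.add_sub_cancel' (hle i)] at hsplit
  rw [hsplit]
  rfl

theorem natCast_le_norm_apply_tsum [CompleteSpace E] (T : E →ₗ[𝕜] F) (R : ℕ → E →L[𝕜] E)
    (W : ℕ → Submodule 𝕜 F) {C : ℕ → ℝ}
    (hC : ∀ m z, ‖z‖ ≤ 2 → ‖(W m).mkQ (T (rangeProd R 0 m z))‖ ≤ C m)
    {n : ℕ → ℕ} (hn : StrictMono n) {a : ℕ → E}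
    (hsmall : ∀ j, ∀ m ≤ n j, ‖rangeProd R m (n j - m) (a j)‖ ≤ (1 / 2) ^ j)
    (hlarge : ∀ j, j + ‖T (∑ i ∈ Finset.range j, rangeProd R 0 (n i) (a i))‖ + C (n j + 1) ≤
      ‖(W (n j + 1)).mkQ (T (rangeProd R 0 (n j) (a j)))‖) (j : ℕ) :
    (j : ℝ) ≤ ‖T (∑' i, rangeProd R 0 (n i) (a i))‖ := by
  set u := fun i => rangeProd R 0 (n i) (a i)
  have hsum : Summable u :=
    .of_norm_bounded summable_geometric_two fun i => by simpa using hsmall i 0 (Nat.zero_le _)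
  obtain ⟨z, hz, htail⟩ := exists_tsum_nat_add_eq_rangeProd_apply R hn hsmall j
  have hsplit : ∑' i, u i = ∑ i ∈ Finset.range j, u i + u j + rangeProd R 0 (n j + 1) z := by
    rw [← htail, ← Finset.sum_range_succ, hsum.sum_add_tsum_nat_add]
  set q := (W (n j + 1)).mkQ
  have hq : ∀ y, ‖q y‖ ≤ ‖y‖ := Submodule.Quotient.norm_mk_le _
  have hdecomp : q (T (u j)) = q (T (∑' i, u i)) - q (T (∑ i ∈ Finset.range j, u i)) -
      q (T (rangeProd R 0 (n j + 1) z)) := by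
    rw [hsplit]
    simp only [map_add]
    abel
  have := hlarge j
  rw [hdecomp] at this
  linarith [norm_sub_le (q (T (∑' i, u i)) - q (T (∑ i ∈ Finset.range j, u i)))
    (q (T (rangeProd R 0 (n j + 1) z))), norm_sub_le (q (T (∑' i, u i)))
    (q (T (∑ i ∈ Finset.range j, u i))), hq (T (∑' i, u i)),
    hq (T (∑ i ∈ Finset.range j, u i)), hC (n j + 1) z hz]

theorem exists_gliding_hump (T : E →ₗ[𝕜] F) (R : ℕ → E →L[𝕜] E) (W : ℕ → Submodule 𝕜 F)
    (hfreq : ∀ N, ∃ n ≥ N, ∀ M : ℝ, ∃ᶠ x in 𝓝 0, M ≤ ‖(W (n + 1)).mkQ (T (rangeProd R 0 n x))‖)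
    (C : ℕ → ℝ) :
    ∃ n : ℕ → ℕ, StrictMono n ∧ ∃ a : ℕ → E,
      (∀ j, ∀ m ≤ n j, ‖rangeProd R m (n j - m) (a j)‖ ≤ (1 / 2) ^ j) ∧
      ∀ j, j + ‖T (∑ i ∈ Finset.range j, rangeProd R 0 (n i) (a i))‖ + C (n j + 1) ≤
        ‖(W (n j + 1)).mkQ (T (rangeProd R 0 (n j) (a j)))‖ := by
  have step : ∀ (N j : ℕ) (M : ℝ), ∃ n ≥ N, ∃ x : E,
      (∀ m ≤ n, ‖rangeProd R m (n - m) x‖ ≤ (1 / 2) ^ j) ∧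
      M + C (n + 1) ≤ ‖(W (n + 1)).mkQ (T (rangeProd R 0 n x))‖ := by
    intro N j M
    obtain ⟨n, hnN, hn⟩ := hfreq N
    have hsmall : ∀ᶠ x in 𝓝 (0 : E), ∀ m ∈ Set.Iic n, ‖rangeProd R m (n - m) x‖ ≤ (1 / 2) ^ j := by
      refine (eventually_all_finite (Set.finite_Iic n)).2 fun m _ => ?_
      have hlim := ((rangeProd R m (n - m)).continuous.tendsto' 0 0 (map_zero _)).norm
      exact hlim.eventually (ge_mem_nhds (by simp))
    obtain ⟨x, hx, hsm⟩ := ((hn (M + C (n + 1))).and_eventually hsmall).exists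
    exact ⟨n, hnN, x, hsm, hx⟩
  choose next hnext x hx_small hx_large using step
  -- the state is (a lower bound for the next index, the partial sum so far)
  let st : ℕ → ℕ × E := fun j => Nat.rec (0, 0) (fun j s =>
    (next s.1 j (j + ‖T s.2‖) + 1,
      s.2 + rangeProd R 0 (next s.1 j (j + ‖T s.2‖)) (x s.1 j (j + ‖T s.2‖)))) j
  let n j := next (st j).1 j (j + ‖T (st j).2‖)
  let a j := x (st j).1 j (j + ‖T (st j).2‖)
  have hst : ∀ j, (st j).2 = ∑ i ∈ Finset.range j, rangeProd R 0 (n i) (a i) := by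
    intro j
    induction j with
    | zero => rfl
    | succ j ih => rw [Finset.sum_range_succ, ← ih]
  refine ⟨n, strictMono_nat_of_lt_succ fun j => hnext _ _ _, a, fun j => hx_small _ _ _,
    fun j => ?_⟩
  rw [← hst]
  exact hx_large _ _ _

theorem separatingSpace_comp_rangeProd_succ_le (T : E →ₗ[𝕜] F) (R : ℕ → E →L[𝕜] E) (n : ℕ) :
    separatingSpace (T ∘ₗ (rangeProd R 0 (n + 1)).toLinearMap) ≤
      separatingSpace (T ∘ₗ (rangeProd R 0 n).toLinearMap) := by
  rw [rangeProd_succ, zero_add]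
  exact separatingSpace_comp_le (T ∘ₗ (rangeProd R 0 n).toLinearMap) (R n)

theorem eventually_separatingSpace_comp_rangeProd_succ_eq [CompleteSpace E] [CompleteSpace F]
    (T : E →ₗ[𝕜] F) (R : ℕ → E →L[𝕜] E) :
    ∀ᶠ n in atTop, separatingSpace (T ∘ₗ (rangeProd R 0 (n + 1)).toLinearMap) =
      separatingSpace (T ∘ₗ (rangeProd R 0 n).toLinearMap) := by
  let Sig := fun n => separatingSpace (T ∘ₗ (rangeProd R 0 n).toLinearMap)
  by_contra hne
  rw [not_eventually, frequently_atTop] at hne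
  have hfreq : ∀ N, ∃ n ≥ N, ∀ M : ℝ,
      ∃ᶠ x in 𝓝 0, M ≤ ‖(Sig (n + 1)).mkQ (T (rangeProd R 0 n x))‖ := by
    intro N
    obtain ⟨n, hnN, hn⟩ := hne N
    refine ⟨n, hnN, frequently_le_norm_mkQ_of_not_separatingSpace_le
      (T := T ∘ₗ (rangeProd R 0 n).toLinearMap) fun hle => hn ?_⟩
    exact le_antisymm (separatingSpace_comp_rangeProd_succ_le T R n) hle
  let Φ : ∀ m, E →L[𝕜] F ⧸ Sig m := fun m =>
    ⟨_, continuous_mkQ_comp_separatingSpace (T ∘ₗ (rangeProd R 0 m).toLinearMap)⟩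
  obtain ⟨n, hn, a, hsmall, hlarge⟩ := exists_gliding_hump T R Sig hfreq fun m => ‖Φ m‖ * 2
  obtain ⟨j, hj⟩ := exists_nat_gt ‖T (∑' i, rangeProd R 0 (n i) (a i))‖
  exact hj.not_ge (natCast_le_norm_apply_tsum T R Sig (fun m z hz => (Φ m).le_opNorm_of_le hz)
    hn hsmall hlarge j)

theorem apply_listProd_map_apply {ι : Type*} {T : E →ₗ[𝕜] F} {R : ι → E →L[𝕜] E}
    {S : ι → F →L[𝕜] F} (hTRS : ∀ i x, T (R i x) = S i (T x)) (l : List ι) (x : E) :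
    T ((l.map R).prod x) = (l.map S).prod (T x) := by
  induction l with
  | nil => rfl
  | cons i l ih => simp [hTRS, ih]

theorem eventually_closure_image_listProd_eq [CompleteSpace E] [CompleteSpace F]
    (T : E →ₗ[𝕜] F) (R : ℕ → E →L[𝕜] E) (S : ℕ → F →L[𝕜] F)
    (hTRS : ∀ n x, T (R n x) = S n (T x)) :
    ∀ᶠ n in atTop, closure (((List.range n).map S).prod '' separatingSpace T) =
      closure (((List.range (n + 1)).map S).prod '' separatingSpace T) := by
  have hclosure : ∀ n, closure (((List.range n).map S).prod '' separatingSpace T) =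
      separatingSpace (T ∘ₗ (rangeProd R 0 n).toLinearMap) := by
    intro n
    rw [← coe_separatingSpace_comp]
    congr 2
    ext x
    simp [rangeProd, List.range_eq_range', apply_listProd_map_apply hTRS]
  filter_upwards [eventually_separatingSpace_comp_rangeProd_succ_eq T R] with n hn
  rw [hclosure, hclosure, hn]

section Multiplication

variable {ι A : Type*} [SeminormedRing A] [NormedAlgebra 𝕜 A]

theorem ContinuousLinearMap.listProd_map_mul_apply (b : ι → A) (l : List ι) (x : A) :
    (l.map fun i => mul 𝕜 A (b i)).prod x = (l.map b).prod * x := by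
  induction l with
  | nil => simp
  | cons i l ih => simp [ih, mul_assoc]

theorem ContinuousLinearMap.listProd_map_flip_mul_apply (b : ι → A) (l : List ι) (x : A) :
    (l.map fun i => (mul 𝕜 A).flip (b i)).prod x = x * (l.map b).reverse.prod := by
  induction l with
  | nil => simp
  | cons i l ih => simp [ih, mul_assoc]

end Multiplication

end

/-- Sinclair's stability lemma: for a surjective algebra homomorphism `φ` between Banach
algebras with separating space `S(φ)` and any sequence `(Bₙ)` in the codomain, eventually
`closure (B₁⋯Bₙ · S(φ)) = closure (B₁⋯Bₙ₊₁ · S(φ))` and similarly on the right. -/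
theorem stmt7 {A B : Type*} [NormedRing A] [NormedAlgebra ℂ A] [CompleteSpace A]
    [NormedRing B] [NormedAlgebra ℂ B] [CompleteSpace B]
    (φ : A →ₐ[ℂ] B) (hsurj : Function.Surjective φ)
    (Bseq : ℕ → B) :
    letI S : Set B := {b : B | ∃ u : ℕ → A, Filter.Tendsto u Filter.atTop (nhds 0) ∧
      Filter.Tendsto (fun k => φ (u k)) Filter.atTop (nhds b)}
    ∃ n₀ : ℕ, ∀ n ≥ n₀,
      closure ((fun s => ((List.range n).map Bseq).prod * s) '' S) =
        closure ((fun s => ((List.range (n + 1)).map Bseq).prod * s) '' S) ∧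
      closure ((fun s => s * ((List.range n).map Bseq).reverse.prod) '' S) =
        closure ((fun s => s * ((List.range (n + 1)).map Bseq).reverse.prod) '' S) := by
  have hS : (separatingSpace φ.toLinearMap : Set B) = {b | ∃ u : ℕ → A,
      Tendsto u atTop (𝓝 0) ∧ Tendsto (fun k => φ (u k)) atTop (𝓝 b)} :=
    Set.ext fun _ => mem_separatingSpace_iff
  choose c hc using fun n => hsurj (Bseq n)
  have hleft := eventually_closure_image_listProd_eq φ.toLinearMap
    (fun n => ContinuousLinearMap.mul ℂ A (c n)) (fun n => ContinuousLinearMap.mul ℂ B (Bseq n))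
    fun n x => by simp [hc]
  have hright := eventually_closure_image_listProd_eq φ.toLinearMap
    (fun n => (ContinuousLinearMap.mul ℂ A).flip (c n))
    (fun n => (ContinuousLinearMap.mul ℂ B).flip (Bseq n)) fun n x => by simp [hc]
  obtain ⟨N, hN⟩ := eventually_atTop.1 (hleft.and hright)
  refine ⟨N, fun n hn => ?_⟩
  rw [hS] at hN
  simpa only [funext (ContinuousLinearMap.listProd_map_mul_apply Bseq _),
    funext (ContinuousLinearMap.listProd_map_flip_mul_apply Bseq _)] using hN n hn
end

section
/- With v_λ as above (λ in the open unit ball of ℂⁿ), the linear functional ρ_λ(A) = ⟨A v_λ, v_λ⟩ on the norm-closed algebra generated by L₁, ..., Lₙ and the identity is multiplicative, and ρ_λ(Lᵢ) = λᵢ for each i. -/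
/-!
The operators `a` for which `v` is an eigenvector of `a†` form a norm-closed unital subalgebra,
so it contains the closed algebra generated by the `Lᵢ`. For such an `a` and a unit vector `v`,
`⟪v, a w⟫ = ⟪a† v, w⟫ = ⟪v, a v⟫ ⟪v, w⟫` for every `w`; taking `w = b v` gives multiplicativity.
-/

open ContinuousLinearMap

section AdjointEigen

variable {𝕜 E : Type*} [RCLike 𝕜] [NormedAddCommGroup E] [InnerProductSpace 𝕜 E]
  [CompleteSpace E]

variable (𝕜) in
/-- Membership asks only `a† v ∈ 𝕜 ∙ v`, so `a† v = 0` is allowed; this makes the set closed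
under sums. -/
def adjointEigenSubalgebra (v : E) : Subalgebra 𝕜 (E →L[𝕜] E) where
  carrier := {a | adjoint a v ∈ 𝕜 ∙ v}
  mul_mem' {a b} ha hb := by
    obtain ⟨μ, hμ⟩ := Submodule.mem_span_singleton.1 ha
    show adjoint (a * b) v ∈ 𝕜 ∙ v
    rw [← star_eq_adjoint, star_mul, star_eq_adjoint, star_eq_adjoint, mul_apply_eq_comp, ← hμ,
      map_smul]
    exact Submodule.smul_mem _ μ hb
  add_mem' ha hb := by
    show adjoint (_ + _) v ∈ 𝕜 ∙ v
    rw [map_add, add_apply]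
    exact Submodule.add_mem _ ha hb
  algebraMap_mem' c := by
    show adjoint (algebraMap 𝕜 _ c) v ∈ 𝕜 ∙ v
    rw [← star_eq_adjoint, ← algebraMap_star_comm, Algebra.algebraMap_eq_smul_one, smul_apply,
      one_apply_eq_self]
    exact Submodule.smul_mem _ _ (Submodule.mem_span_singleton_self v)

theorem mem_adjointEigenSubalgebra_iff {v : E} {a : E →L[𝕜] E} :
    a ∈ adjointEigenSubalgebra 𝕜 v ↔ adjoint a v ∈ 𝕜 ∙ v :=
  Iff.rfl

theorem isClosed_adjointEigenSubalgebra (v : E) :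
    IsClosed (adjointEigenSubalgebra 𝕜 v : Set (E →L[𝕜] E)) := by
  have hcont : Continuous fun a : E →L[𝕜] E => adjoint a v :=
    (apply 𝕜 E v).continuous.comp adjoint.continuous
  exact (Submodule.closed_of_finiteDimensional (𝕜 ∙ v)).preimage hcont

theorem topologicalClosure_adjoin_le_adjointEigenSubalgebra {v : E} {s : Set (E →L[𝕜] E)}
    (hs : s ⊆ adjointEigenSubalgebra 𝕜 v) :
    (Algebra.adjoin 𝕜 s).topologicalClosure ≤ adjointEigenSubalgebra 𝕜 v :=
  Subalgebra.topologicalClosure_minimal (Algebra.adjoin_le hs)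
    (isClosed_adjointEigenSubalgebra v)

theorem inner_apply_eq_conj_mul_of_adjoint_apply_eq_smul {v : E} {a : E →L[𝕜] E} {μ : 𝕜}
    (h : adjoint a v = μ • v) (w : E) :
    inner 𝕜 v (a w) = starRingEnd 𝕜 μ * inner 𝕜 v w := by
  rw [← adjoint_inner_left, h, inner_smul_left]

theorem inner_apply_eq_mul_of_mem_adjointEigenSubalgebra {v : E} (hv : ‖v‖ = 1)
    {a : E →L[𝕜] E} (ha : a ∈ adjointEigenSubalgebra 𝕜 v) (w : E) :
    inner 𝕜 v (a w) = inner 𝕜 v (a v) * inner 𝕜 v w := by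
  obtain ⟨μ, hμ⟩ := Submodule.mem_span_singleton.1 ha
  rw [inner_apply_eq_conj_mul_of_adjoint_apply_eq_smul hμ.symm,
    inner_apply_eq_conj_mul_of_adjoint_apply_eq_smul hμ.symm v,
    inner_self_eq_one_of_norm_eq_one hv, mul_one]

end AdjointEigen

theorem stmt15_general (n : ℕ) (lam : Fin n → ℂ)
    (L : Fin n →
      (lp (fun _ : List (Fin n) => ℂ) 2 →L[ℂ] lp (fun _ : List (Fin n) => ℂ) 2))
    (v : lp (fun _ : List (Fin n) => ℂ) 2) (hv : ‖v‖ = 1)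
    (heig : ∀ i, ContinuousLinearMap.adjoint (L i) v = (starRingEnd ℂ) (lam i) • v) :
    (∀ a b, a ∈ (Algebra.adjoin ℂ (Set.range L)).topologicalClosure →
        b ∈ (Algebra.adjoin ℂ (Set.range L)).topologicalClosure →
        (inner ℂ v ((a * b) v) : ℂ) = (inner ℂ v (a v) : ℂ) * (inner ℂ v (b v) : ℂ)) ∧
      ∀ i, (inner ℂ v (L i v) : ℂ) = lam i := by
  have hrange : Set.range L ⊆ adjointEigenSubalgebra ℂ v := by
    rintro _ ⟨i, rfl⟩
    rw [SetLike.mem_coe, mem_adjointEigenSubalgebra_iff, heig i]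
    exact Submodule.smul_mem _ _ (Submodule.mem_span_singleton_self v)
  refine ⟨fun a b ha _ => ?_, fun i => ?_⟩
  · exact inner_apply_eq_mul_of_mem_adjointEigenSubalgebra hv
      (topologicalClosure_adjoin_le_adjointEigenSubalgebra hrange ha) (b v)
  · rw [inner_apply_eq_conj_mul_of_adjoint_apply_eq_smul (heig i),
      inner_self_eq_one_of_norm_eq_one hv, RCLike.conj_conj, mul_one]

set_option synthInstance.maxHeartbeats 1000000 in
set_option maxHeartbeats 1000000 in
/-- With `v = v_λ` the eigenvector of the adjoints of the creation operators on the full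
Fock space, the functional `ρ(A) = ⟨A v, v⟩` is multiplicative on the norm-closed unital
algebra generated by `L₁, …, Lₙ`, and `ρ(Lᵢ) = λᵢ`. -/
theorem stmt15 (n : ℕ) (lam : Fin n → ℂ) (hlam : ∑ i, ‖lam i‖ ^ 2 < 1)
    (L : Fin n →
      (lp (fun _ : List (Fin n) => ℂ) 2 →L[ℂ] lp (fun _ : List (Fin n) => ℂ) 2))
    (hL : ∀ (i : Fin n) (w : List (Fin n)),
      L i (lp.single 2 w 1) = lp.single 2 (i :: w) 1)
    (v : lp (fun _ : List (Fin n) => ℂ) 2) (hv : ‖v‖ = 1)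
    (heig : ∀ i, ContinuousLinearMap.adjoint (L i) v = (starRingEnd ℂ) (lam i) • v) :
    (∀ a b, a ∈ (Algebra.adjoin ℂ (Set.range L)).topologicalClosure →
        b ∈ (Algebra.adjoin ℂ (Set.range L)).topologicalClosure →
        (inner ℂ v ((a * b) v) : ℂ) = (inner ℂ v (a v) : ℂ) * (inner ℂ v (b v) : ℂ)) ∧
      ∀ i, (inner ℂ v (L i v) : ℂ) = lam i :=
  stmt15_general n lam L v hv heig
end

section
/- Let A be a Banach algebra possessing an approximate identity consisting of finite sums of a family {P_x}_{x∈V} of mutually orthogonal idempotents (P_x P_y = 0 for x ≠ y, P_x² = P_x). Then for every nonzero continuous multiplicative linear functional ρ on A there is a unique x ∈ V with ρ(P_x) = 1. -/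
/-- If a Banach algebra has an approximate identity consisting of finite sums of a family of
mutually orthogonal idempotents `{P x}`, then every nonzero continuous multiplicative linear
functional satisfies `ρ (P x) = 1` for exactly one `x`. -/
theorem stmt16 {A : Type*} [NonUnitalNormedRing A] [NormedSpace ℂ A] [CompleteSpace A]
    {V : Type*} (P : V → A)
    (hidem : ∀ x, P x * P x = P x) (horth : ∀ x y, x ≠ y → P x * P y = 0)
    (happrox : ∀ a : A,
      Filter.Tendsto (fun F : Finset V => (∑ x ∈ F, P x) * a) Filter.atTop (nhds a) ∧
      Filter.Tendsto (fun F : Finset V => a * ∑ x ∈ F, P x) Filter.atTop (nhds a))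
    (ρ : A →L[ℂ] ℂ) (hmul : ∀ a b : A, ρ (a * b) = ρ a * ρ b) (hρ : ρ ≠ 0) :
    ∃! x : V, ρ (P x) = 1 := by
  have hval : ∀ x, ρ (P x) = 0 ∨ ρ (P x) = 1 := by
    intro x
    have h : ρ (P x) * ρ (P x) = ρ (P x) := by rw [← hmul, hidem]
    have : ρ (P x) * (ρ (P x) - 1) = 0 := by ring_nf; linear_combination h
    rcases mul_eq_zero.mp this with h0 | h1
    · exact Or.inl h0
    · exact Or.inr (sub_eq_zero.mp h1)
  -- existence
  obtain ⟨a, ha⟩ : ∃ a, ρ a ≠ 0 := by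
    by_contra h
    push_neg at h
    exact hρ (by ext a; simpa using h a)
  have htend : Filter.Tendsto (fun F : Finset V => ρ ((∑ x ∈ F, P x) * a))
      Filter.atTop (nhds (ρ a)) := (ρ.continuous.tendsto a).comp (happrox a).1
  have hev : ∀ᶠ F : Finset V in Filter.atTop, ρ ((∑ x ∈ F, P x) * a) ≠ 0 :=
    htend.eventually_ne ha
  obtain ⟨F, hF⟩ := hev.exists
  rw [hmul] at hF
  have hFne : ρ (∑ x ∈ F, P x) ≠ 0 := fun h => hF (by rw [h, zero_mul])
  rw [map_sum] at hFne
  obtain ⟨x, _, hx⟩ : ∃ x ∈ F, ρ (P x) ≠ 0 := by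
    by_contra h
    push_neg at h
    exact hFne (Finset.sum_eq_zero h)
  have hx1 : ρ (P x) = 1 := (hval x).resolve_left hx
  refine ⟨x, hx1, fun y hy => ?_⟩
  by_contra hne
  have : ρ (P y * P x) = 0 := by rw [horth y x hne, map_zero]
  rw [hmul, hy, hx1] at this
  norm_num at this
end
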